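/- arXiv:0809.4381 — 2 statements merged into one kernel-verified Lean document; each statement's English description precedes it below -/
import Mathlib

section
/- Let k be a field, let F ∈ k[t] be a monic polynomial of degree n ≥ 2, let a₀ be the constant coefficient of F and a₁ the coefficient of t in F, and let b ∈ k with b ≠ a₁. Then the two-variable polynomial F(t) − b·t − a₀ − x^(n−1) is irreducible in the polynomial ring k[x,t]. -/
/-!
As a polynomial in `x` over `k[t]` the given polynomial is `c - x ^ (n - 1)` with
`c = F - b t - a₀`. Since `c` has no constant term and its `t`-coefficient `a₁ - b` is nonzero,
`t` divides `c` exactly once, so Eisenstein's criterion at the prime `t` applies.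
-/

open Polynomial

namespace Polynomial

theorem irreducible_X_pow_sub_C_of_prime {R : Type*} [CommRing R] [IsDomain R] {p c : R}
    (hp : Prime p) (hpc : p ∣ c) (hp2c : ¬p ^ 2 ∣ c) {m : ℕ} (hm : m ≠ 0) :
    Irreducible (X ^ m - C c : R[X]) := by
  have hmonic : (X ^ m - C c : R[X]).Monic := monic_X_pow_sub_C c hm
  have hprime : (Ideal.span {p}).IsPrime := (Ideal.span_singleton_prime hp.ne_zero).mpr hp
  refine IsEisensteinAt.irreducible ?_ hprime hmonic.isPrimitive
    (by rwa [natDegree_X_pow_sub_C, Nat.pos_iff_ne_zero])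
  refine hmonic.isEisensteinAt_of_mem_of_notMem hprime.ne_top (fun {i} hi => ?_) ?_
  · rw [natDegree_X_pow_sub_C] at hi
    rw [coeff_sub, coeff_X_pow, if_neg hi.ne, coeff_C, zero_sub, neg_mem_iff]
    split_ifs
    · exact Ideal.mem_span_singleton.mpr hpc
    · exact zero_mem _
  · rwa [coeff_sub, coeff_X_pow, if_neg (Ne.symm hm), coeff_C_zero, zero_sub, neg_mem_iff,
      Ideal.span_singleton_pow, Ideal.mem_span_singleton]

theorem irreducible_C_sub_X_pow_of_prime {R : Type*} [CommRing R] [IsDomain R] {p c : R}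
    (hp : Prime p) (hpc : p ∣ c) (hp2c : ¬p ^ 2 ∣ c) {m : ℕ} (hm : m ≠ 0) :
    Irreducible (C c - X ^ m : R[X]) :=
  Associated.irreducible ⟨-1, by rw [Units.val_neg, Units.val_one, mul_neg_one, neg_sub]⟩
    (irreducible_X_pow_sub_C_of_prime hp hpc hp2c hm)

theorem X_dvd_sub_C_mul_X_sub_C_coeff_zero {R : Type*} [Ring R] (F : R[X]) (b : R) :
    X ∣ F - C b * X - C (F.coeff 0) := by
  simp [X_dvd_iff]

theorem not_X_sq_dvd_sub_C_mul_X_sub_C_coeff_zero {R : Type*} [Ring R] {F : R[X]} {b : R}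
    (hb : b ≠ F.coeff 1) : ¬X ^ 2 ∣ F - C b * X - C (F.coeff 0) := by
  rw [X_pow_dvd_iff]
  intro h
  have h1 := h 1 one_lt_two
  simp only [coeff_sub, coeff_mul_X, coeff_C_zero, coeff_C_succ, sub_zero] at h1
  exact hb (sub_eq_zero.mp h1).symm

end Polynomial

namespace MvPolynomial

variable (R : Type*) [CommRing R]

/-- `R[x, t] ≃ R[t][x]`, where `x = X 0` becomes the outer variable. -/
noncomputable def finTwoAlgEquiv : MvPolynomial (Fin 2) R ≃ₐ[R] R[X][X] :=
  (finSuccEquiv R 1).trans (Polynomial.mapAlgEquiv (uniqueAlgEquiv R (Fin 1)))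

variable {R}

@[simp]
theorem finTwoAlgEquiv_X_zero : finTwoAlgEquiv R (X 0) = Polynomial.X := by
  simp [finTwoAlgEquiv, finSuccEquiv_X_zero]

@[simp]
theorem finTwoAlgEquiv_X_one : finTwoAlgEquiv R (X 1) = Polynomial.C Polynomial.X := by
  rw [finTwoAlgEquiv, AlgEquiv.trans_apply, ← Fin.succ_zero_eq_one, finSuccEquiv_X_succ]
  simp

@[simp]
theorem finTwoAlgEquiv_C (a : R) : finTwoAlgEquiv R (C a) = Polynomial.C (Polynomial.C a) := by
  simp [finTwoAlgEquiv, finSuccEquiv_apply]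

@[simp]
theorem finTwoAlgEquiv_aeval_X_one (F : R[X]) :
    finTwoAlgEquiv R (Polynomial.aeval (X 1) F) = Polynomial.C F := by
  rw [← Polynomial.aeval_algHom_apply, finTwoAlgEquiv_X_one]
  calc Polynomial.aeval (Polynomial.C Polynomial.X) F
      = Polynomial.CAlgHom (Polynomial.aeval Polynomial.X F) :=
        Polynomial.aeval_algHom_apply Polynomial.CAlgHom Polynomial.X F
    _ = Polynomial.C F := by rw [Polynomial.aeval_X_left_apply]; rfl

end MvPolynomial

theorem stmt_6_general (k : Type*) [Field k] (n : ℕ) (hn : 2 ≤ n) (F : Polynomial k)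
    (b : k) (hb : b ≠ F.coeff 1) :
    Irreducible
      (Polynomial.aeval (MvPolynomial.X 1 : MvPolynomial (Fin 2) k) F -
          MvPolynomial.C b * MvPolynomial.X 1 - MvPolynomial.C (F.coeff 0) -
          MvPolynomial.X 0 ^ (n - 1)) := by
  have hirred : Irreducible (C (F - C b * X - C (F.coeff 0)) - X ^ (n - 1) : k[X][X]) :=
    irreducible_C_sub_X_pow_of_prime prime_X (X_dvd_sub_C_mul_X_sub_C_coeff_zero F b)
      (not_X_sq_dvd_sub_C_mul_X_sub_C_coeff_zero hb) (by omega)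
  refine (MulEquiv.irreducible_iff (MvPolynomial.finTwoAlgEquiv k)).mp ?_
  simpa [Polynomial.C_sub, Polynomial.C_mul] using hirred

/-- For a field `k`, a monic `F ∈ k[t]` of degree `n ≥ 2` with
constant coefficient `a₀` and linear coefficient `a₁`, and `b ∈ k` with
`b ≠ a₁`, the polynomial `F(t) − b·t − a₀ − x^(n−1)` is irreducible in
`k[x,t]`. Here variable `0` is `x` and variable `1` is `t`. -/
theorem stmt_6 (k : Type*) [Field k] (n : ℕ) (hn : 2 ≤ n) (F : Polynomial k)
    (hF : F.Monic) (hdeg : F.natDegree = n) (b : k) (hb : b ≠ F.coeff 1) :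
    Irreducible
      (Polynomial.aeval (MvPolynomial.X 1 : MvPolynomial (Fin 2) k) F -
          MvPolynomial.C b * MvPolynomial.X 1 - MvPolynomial.C (F.coeff 0) -
          MvPolynomial.X 0 ^ (n - 1)) :=
  stmt_6_general k n hn F b hb
end

section
/- Let k be an algebraically closed field of odd characteristic p, let n ≥ 2 be an integer with p ∤ n·(n−1), and let F ∈ k[t] be monic of degree n. Then there are at most n − 1 elements d ∈ k for which the degree-n homogenization of the polynomial F(t) − 2x^(n−1) + t^(n−1) − d fails to define a smooth projective plane curve; that is, the set of d ∈ k such that the homogenization H_d ∈ k[X,T,Z] of F(t) − 2x^(n−1) + t^(n−1) − d has a common zero with its three partial derivatives in k³ ∖ {(0,0,0)} has cardinality at most n − 1. -/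
open MvPolynomial

/-- The degree-`d` homogenization of a two-variable polynomial `f(x,t)`
(variable `0` is `x`, variable `1` is `t`) as a polynomial in three variables
`X, T, Z` (variable `0` is `X`, `1` is `T`, `2` is `Z`): each monomial
`c·x^i·t^j` of `f` becomes `c·X^i·T^j·Z^(d−i−j)`.  For `d` the total degree of
`f` this is `Z^d·f(X/Z, T/Z)`. -/
noncomputable def homogenize {K : Type*} [CommSemiring K] (d : ℕ)
    (f : MvPolynomial (Fin 2) K) : MvPolynomial (Fin 3) K :=
  f.support.sum fun m =>
    MvPolynomial.monomial
      (Finsupp.single (0 : Fin 3) (m 0) + Finsupp.single (1 : Fin 3) (m 1) +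
        Finsupp.single (2 : Fin 3) (d - (m 0 + m 1)))
      (MvPolynomial.coeff m f)

/-! With `G = F + t^(n-1)` the form is `H_d = Z^n (G - d)(T/Z) - 2 X^(n-1) Z`.
A singular point has `Z ≠ 0`: otherwise `∂H/∂T = n T^(n-1)` forces `T = 0`, and then
`∂H/∂Z = -2 X^(n-1)` forces `X = 0`. With `Z ≠ 0`, `∂H/∂X = -2(n-1) X^(n-2) Z` forces `X = 0`,
and `s = T/Z` is a double root of `G - d`. So every bad `d` is a critical value of `G`, and
`G'` has degree `n - 1` because its leading coefficient is `n ≠ 0`. -/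

section Homogenize

variable {R : Type*} [CommSemiring R] (d : ℕ)

lemma homogenize_add (f g : MvPolynomial (Fin 2) R) :
    homogenize d (f + g) = homogenize d f + homogenize d g := by
  change Finsupp.sum (AddMonoidAlgebra.coeff (f + g)) _ = _
  rw [AddMonoidAlgebra.coeff_add]
  exact Finsupp.sum_add_index' (fun _ => by simp) (fun _ _ _ => by simp)

lemma homogenize_monomial (m : Fin 2 →₀ ℕ) (c : R) :
    homogenize d (monomial m c) = C c * X 0 ^ m 0 * X 1 ^ m 1 * X 2 ^ (d - (m 0 + m 1)) := by
  classical
  rw [homogenize, support_monomial]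
  split_ifs with hc
  · simp [hc]
  · simp only [Finset.sum_singleton, coeff_monomial, if_true, X_pow_eq_monomial, C_mul_monomial,
      monomial_mul, mul_one]

lemma homogenize_aeval_X_one (P : Polynomial R) (hP : P.natDegree ≤ d) :
    homogenize d (Polynomial.aeval (X 1) P) = rename ![1, 2] (P.homogenize d) := by
  refine Polynomial.induction_with_natDegree_le
    (fun P => homogenize d (Polynomial.aeval (X 1) P) = rename ![1, 2] (P.homogenize d)) d
    (by simp [homogenize]) (fun m r _ hm => ?_) (fun f g _ _ hf hg => ?_) P hP
  · rw [map_mul, Polynomial.aeval_C, map_pow, Polynomial.aeval_X, algebraMap_eq,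
      C_mul_X_pow_eq_monomial, homogenize_monomial, Polynomial.homogenize_C_mul,
      Polynomial.homogenize_X_pow hm]
    simp [mul_assoc]
  · rw [map_add, homogenize_add, hf, hg, Polynomial.homogenize_add, map_add]

end Homogenize

section HomogenizeSub

variable {R : Type*} [CommRing R] (d : ℕ)

lemma homogenize_sub (f g : MvPolynomial (Fin 2) R) :
    homogenize d (f - g) = homogenize d f - homogenize d g := by
  change Finsupp.sum (AddMonoidAlgebra.coeff (f - g)) _ = _
  rw [AddMonoidAlgebra.coeff_sub]
  exact Finsupp.sum_sub_index (fun _ _ _ => by simp)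

lemma homogenize_aeval_X_one_sub_C_mul_X_zero_pow (P : Polynomial R) (hP : P.natDegree ≤ d)
    (c : R) (m : ℕ) :
    homogenize d (Polynomial.aeval (X 1) P - C c * X 0 ^ m) =
      rename ![1, 2] (P.homogenize d) - C c * X 0 ^ m * X 2 ^ (d - m) := by
  rw [homogenize_sub, homogenize_aeval_X_one d P hP, C_mul_X_pow_eq_monomial, homogenize_monomial]
  simp

end HomogenizeSub

lemma MvPolynomial.IsHomogeneous.eval_zero {R σ : Type*} [CommSemiring R]
    {φ : MvPolynomial σ R} {n : ℕ} (h : φ.IsHomogeneous n) (hn : n ≠ 0) : eval 0 φ = 0 := by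
  rw [MvPolynomial.eval_zero, constantCoeff_eq, h.coeff_eq_zero]
  simpa using hn.symm

lemma pderiv_rename_eq_zero {R σ τ : Type*} [CommSemiring R] {f : σ → τ} {i : τ}
    (hi : i ∉ Set.range f) (p : MvPolynomial σ R) : pderiv i (rename f p) = 0 := by
  classical
  refine pderiv_eq_zero_of_notMem_vars fun h => hi ?_
  obtain ⟨j, -, rfl⟩ := Finset.mem_image.mp (vars_rename f p h)
  exact ⟨j, rfl⟩

namespace Polynomial

section CommSemiring

variable {R : Type*} [CommSemiring R]

lemma coeff_derivative_pred (P : R[X]) {n : ℕ} (hn : n ≠ 0) :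
    (derivative P).coeff (n - 1) = P.coeff n * n := by
  obtain ⟨m, rfl⟩ := Nat.exists_eq_succ_of_ne_zero hn
  simp [coeff_derivative]

lemma Monic.derivative_ne_zero {G : R[X]} (hG : G.Monic) (hn : (G.natDegree : R) ≠ 0) :
    derivative G ≠ 0 := by
  intro h
  have hcoeff := G.coeff_derivative_pred (n := G.natDegree) fun h0 => hn (by simp [h0])
  rw [h, coeff_zero, hG.coeff_natDegree, one_mul] at hcoeff
  exact hn hcoeff.symm

lemma eval_homogenize_of_eq_zero (P : R[X]) (n : ℕ) (x : Fin 2 → R) (hx : x 1 = 0) :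
    MvPolynomial.eval x (P.homogenize n) = P.coeff n * x 0 ^ n := by
  rw [homogenize, map_sum, Finset.sum_eq_single_of_mem (n, 0) (by simp)]
  · simp [MvPolynomial.eval_monomial, Finsupp.prod_fintype]
  · rintro ⟨a, b⟩ hab hne
    obtain rfl : a + b = n := Finset.HasAntidiagonal.mem_antidiagonal.mp hab
    have hb : b ≠ 0 := by rintro rfl; exact hne rfl
    simp [MvPolynomial.eval_monomial, Finsupp.prod_fintype, hx, hb]

lemma pderiv_zero_homogenize (P : R[X]) {n : ℕ} (hn : n ≠ 0) :
    pderiv 0 (P.homogenize n) = (derivative P).homogenize (n - 1) := by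
  induction P using Polynomial.induction_on' with
  | add f g hf hg => simp [hf, hg]
  | monomial m r =>
    rw [derivative_monomial]
    rcases le_or_gt m n with hm | hm
    · rw [homogenize_monomial hm, pderiv_monomial]
      rcases m.eq_zero_or_pos with rfl | hm0
      · simp
      · rw [homogenize_monomial (by omega)]
        congr 1
        · congr 1
          ext i
          fin_cases i <;> simp
          omega
        · simp
    · rw [homogenize_monomial_of_lt hm, homogenize_monomial_of_lt (by omega), map_zero]

end CommSemiring

section IsDomain

variable {K : Type*} [CommRing K] [IsDomain K]

lemma ncard_setOf_isRoot_le {P : K[X]} (hP : P ≠ 0) : {x | P.IsRoot x}.ncard ≤ P.natDegree := by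
  classical
  have hroots : {x | P.IsRoot x} = ↑P.roots.toFinset := by
    ext x
    simp [mem_roots hP]
  rw [hroots, Set.ncard_coe_finset]
  exact (Multiset.toFinset_card_le _).trans (card_roots' P)

def criticalValues (G : K[X]) : Set K :=
  G.eval '' {s | (derivative G).IsRoot s}

lemma criticalValues_finite {G : K[X]} (hG : derivative G ≠ 0) : G.criticalValues.Finite :=
  (finite_setOfPred_isRoot hG).image _

lemma ncard_criticalValues_le {G : K[X]} (hG : derivative G ≠ 0) :
    G.criticalValues.ncard ≤ G.natDegree - 1 :=
  (Set.ncard_image_le (finite_setOfPred_isRoot hG)).trans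
    ((ncard_setOf_isRoot_le hG).trans (natDegree_derivative_le G))

end IsDomain

end Polynomial

section TernaryForm

variable {R : Type*} [CommRing R]

/-- The degree-`n` homogenization of `P(t) - c x^(n-1)`, with `X 0, X 1, X 2` standing for
`X, T, Z`. -/
noncomputable def ternaryForm (P : Polynomial R) (n : ℕ) (c : R) : MvPolynomial (Fin 3) R :=
  rename ![1, 2] (P.homogenize n) - C c * X 0 ^ (n - 1) * X 2

lemma injective_one_two : Function.Injective ![(1 : Fin 3), 2] := by decide

lemma comp_one_two {α : Type*} (v : Fin 3 → α) : v ∘ ![1, 2] = ![v 1, v 2] :=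
  (FinVec.map_eq _ _).symm

section Eval

variable (P : Polynomial R) (n : ℕ) (c : R) (v : Fin 3 → R)

lemma eval_ternaryForm :
    eval v (ternaryForm P n c) = eval ![v 1, v 2] (P.homogenize n) - c * v 0 ^ (n - 1) * v 2 := by
  simp [ternaryForm, eval_rename, comp_one_two]

lemma eval_pderiv_zero_ternaryForm :
    eval v (pderiv 0 (ternaryForm P n c)) = -(c * ((n - 1 : ℕ) : R) * v 0 ^ (n - 1 - 1) * v 2) := by
  rw [ternaryForm, map_sub, pderiv_rename_eq_zero (by simp)]
  simp [pderiv_X, mul_assoc, mul_comm (v 2)]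

lemma eval_pderiv_one_ternaryForm :
    eval v (pderiv 1 (ternaryForm P n c)) = eval ![v 1, v 2] (pderiv 0 (P.homogenize n)) := by
  have h := pderiv_rename injective_one_two 0 (P.homogenize n)
  simp only [Matrix.cons_val_zero] at h
  simp [ternaryForm, h, pderiv_X, eval_rename, comp_one_two]

lemma eval_pderiv_two_ternaryForm :
    eval v (pderiv 2 (ternaryForm P n c)) =
      eval ![v 1, v 2] (pderiv 1 (P.homogenize n)) - c * v 0 ^ (n - 1) := by
  have h := pderiv_rename injective_one_two 1 (P.homogenize n)
  simp only [Matrix.cons_val_one, Matrix.cons_val_zero] at h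
  simp [ternaryForm, h, pderiv_X, eval_rename, comp_one_two]

end Eval

lemma homogenize_eq_ternaryForm (F : Polynomial R) {n : ℕ} (hn : 1 ≤ n) (d : R)
    (hdeg : (F + Polynomial.X ^ (n - 1) - Polynomial.C d).natDegree ≤ n) :
    homogenize n (Polynomial.aeval (X 1 : MvPolynomial (Fin 2) R) F - 2 * X 0 ^ (n - 1) +
        X 1 ^ (n - 1) - C d) =
      ternaryForm (F + Polynomial.X ^ (n - 1) - Polynomial.C d) n 2 := by
  have h : Polynomial.aeval (X 1 : MvPolynomial (Fin 2) R) F - 2 * X 0 ^ (n - 1) +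
      X 1 ^ (n - 1) - C d =
      Polynomial.aeval (X 1) (F + Polynomial.X ^ (n - 1) - Polynomial.C d) - C 2 * X 0 ^ (n - 1) := by
    simp only [map_sub, map_add, map_pow, Polynomial.aeval_X, Polynomial.aeval_C, algebraMap_eq,
      map_ofNat]
    ring
  rw [h, homogenize_aeval_X_one_sub_C_mul_X_zero_pow n _ hdeg, Nat.sub_sub_self hn, pow_one]
  rfl

end TernaryForm

theorem exists_isRoot_derivative_of_singular {k : Type*} [Field k] {P : Polynomial k} {n : ℕ} (hn : 2 ≤ n)
    (hdeg : P.natDegree = n) (hnk : (n : k) ≠ 0) (hn1k : ((n - 1 : ℕ) : k) ≠ 0) {c : k}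
    (hc : c ≠ 0) {v : Fin 3 → k} (hv : v ≠ 0) (hH : eval v (ternaryForm P n c) = 0)
    (hD : ∀ j, eval v (pderiv j (ternaryForm P n c)) = 0) :
    ∃ s, P.IsRoot s ∧ (Polynomial.derivative P).IsRoot s := by
  have hdX := hD 0
  have hdT := hD 1
  have hdZ := hD 2
  rw [eval_pderiv_zero_ternaryForm] at hdX
  rw [eval_pderiv_one_ternaryForm, P.pderiv_zero_homogenize (by omega)] at hdT
  rw [eval_pderiv_two_ternaryForm] at hdZ
  rw [eval_ternaryForm] at hH
  by_cases hz : v 2 = 0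
  · have hlead : P.coeff n ≠ 0 := by
      rw [← hdeg]
      exact Polynomial.leadingCoeff_ne_zero.mpr (Polynomial.ne_zero_of_natDegree_gt (hdeg ▸ hn))
    rw [Polynomial.eval_homogenize_of_eq_zero _ _ _ hz, P.coeff_derivative_pred (by omega)] at hdT
    have ht : v 1 = 0 := by simpa [hlead, hnk, pow_eq_zero_iff (by omega : n - 1 ≠ 0)] using hdT
    rw [hz, ht, ← Matrix.zero_empty, Matrix.cons_zero_zero, Matrix.cons_zero_zero,
      P.isHomogeneous_homogenize.pderiv.eval_zero (by omega)] at hdZ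
    have hx : v 0 = 0 := by simpa [hc, pow_eq_zero_iff (by omega : n - 1 ≠ 0)] using hdZ
    exact absurd (_root_.funext fun i => by fin_cases i <;> assumption) hv
  · have hx : v 0 ^ (n - 1) = 0 :=
      pow_eq_zero_of_le (Nat.sub_le _ _) (by simpa [hc, hn1k, hz] using hdX)
    refine ⟨v 1 / v 2, ?_, ?_⟩
    · rw [hx, Polynomial.eval_homogenize hdeg.le _ hz] at hH
      simpa [hz] using hH
    · rw [Polynomial.eval_homogenize (hdeg ▸ Polynomial.natDegree_derivative_le P) _ hz] at hdT
      simpa [hz] using hdT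

theorem stmt_8_general (k : Type*) [Field k] (p : ℕ) (hp : CharP k p)
    (hodd : Odd p) (n : ℕ) (hn : 2 ≤ n) (hpn : ¬ p ∣ n * (n - 1))
    (F : Polynomial k) (hF : F.Monic) (hdeg : F.natDegree = n) :
    ({d : k | ∃ v : Fin 3 → k, v ≠ 0 ∧
        MvPolynomial.eval v
          (homogenize n
            (Polynomial.aeval (MvPolynomial.X 1 : MvPolynomial (Fin 2) k) F -
              2 * MvPolynomial.X 0 ^ (n - 1) + MvPolynomial.X 1 ^ (n - 1) -
              MvPolynomial.C d)) = 0 ∧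
        ∀ j : Fin 3, MvPolynomial.eval v
          (MvPolynomial.pderiv j
            (homogenize n
              (Polynomial.aeval (MvPolynomial.X 1 : MvPolynomial (Fin 2) k) F -
                2 * MvPolynomial.X 0 ^ (n - 1) + MvPolynomial.X 1 ^ (n - 1) -
                MvPolynomial.C d))) = 0}).Finite ∧
    ({d : k | ∃ v : Fin 3 → k, v ≠ 0 ∧
        MvPolynomial.eval v
          (homogenize n
            (Polynomial.aeval (MvPolynomial.X 1 : MvPolynomial (Fin 2) k) F -
              2 * MvPolynomial.X 0 ^ (n - 1) + MvPolynomial.X 1 ^ (n - 1) -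
              MvPolynomial.C d)) = 0 ∧
        ∀ j : Fin 3, MvPolynomial.eval v
          (MvPolynomial.pderiv j
            (homogenize n
              (Polynomial.aeval (MvPolynomial.X 1 : MvPolynomial (Fin 2) k) F -
                2 * MvPolynomial.X 0 ^ (n - 1) + MvPolynomial.X 1 ^ (n - 1) -
                MvPolynomial.C d))) = 0}).ncard ≤ n - 1 := by
  have h2 : (2 : k) ≠ 0 :=
    Ring.two_ne_zero (by rw [ringChar.eq k p]; rintro rfl; exact absurd hodd (by decide))
  have hnk : (n : k) ≠ 0 := (CharP.cast_eq_zero_iff k p n).not.mpr fun h => hpn (h.mul_right _)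
  have hn1k : ((n - 1 : ℕ) : k) ≠ 0 :=
    (CharP.cast_eq_zero_iff k p _).not.mpr fun h => hpn (h.mul_left _)
  set G := F + Polynomial.X ^ (n - 1)
  have hlt : (Polynomial.X ^ (n - 1) : Polynomial k).natDegree < F.natDegree := by
    rw [Polynomial.natDegree_X_pow, hdeg]
    omega
  have hG : G.natDegree = n := (Polynomial.natDegree_add_eq_left_of_natDegree_lt hlt).trans hdeg
  have hG' : Polynomial.derivative G ≠ 0 :=
    (hF.add_of_left (Polynomial.degree_lt_degree hlt)).derivative_ne_zero (by rwa [hG])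
  have hcrit : ∀ {S : Set k}, S ⊆ G.criticalValues → S.Finite ∧ S.ncard ≤ n - 1 := fun hS =>
    ⟨(Polynomial.criticalValues_finite hG').subset hS,
      (Set.ncard_le_ncard hS (Polynomial.criticalValues_finite hG')).trans
        (hG ▸ Polynomial.ncard_criticalValues_le hG')⟩
  refine hcrit fun d ⟨v, hv, hH, hD⟩ => ?_
  have hGd : (G - Polynomial.C d).natDegree = n := by rw [Polynomial.natDegree_sub_C, hG]
  rw [homogenize_eq_ternaryForm F (by omega) d hGd.le] at hH hD
  obtain ⟨s, hs, hs'⟩ := exists_isRoot_derivative_of_singular hn hGd hnk hn1k h2 hv hH hD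
  exact ⟨s, by simpa using hs', by simpa [sub_eq_zero] using hs⟩

/-- Over an algebraically closed field `k` of odd characteristic
`p`, with `n ≥ 2`, `p ∤ n·(n−1)` and `F ∈ k[t]` monic of degree `n`, the set
of `d ∈ k` for which the degree-`n` homogenization `H_d` of
`F(t) − 2x^(n−1) + t^(n−1) − d` has a common zero with its three partial
derivatives in `k³ ∖ {0}` (i.e. fails to define a smooth projective plane
curve) has cardinality at most `n − 1`. -/
theorem stmt_8 (k : Type*) [Field k] [IsAlgClosed k] (p : ℕ) (hp : CharP k p)
    (hodd : Odd p) (n : ℕ) (hn : 2 ≤ n) (hpn : ¬ p ∣ n * (n - 1))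
    (F : Polynomial k) (hF : F.Monic) (hdeg : F.natDegree = n) :
    ({d : k | ∃ v : Fin 3 → k, v ≠ 0 ∧
        MvPolynomial.eval v
          (homogenize n
            (Polynomial.aeval (MvPolynomial.X 1 : MvPolynomial (Fin 2) k) F -
              2 * MvPolynomial.X 0 ^ (n - 1) + MvPolynomial.X 1 ^ (n - 1) -
              MvPolynomial.C d)) = 0 ∧
        ∀ j : Fin 3, MvPolynomial.eval v
          (MvPolynomial.pderiv j
            (homogenize n
              (Polynomial.aeval (MvPolynomial.X 1 : MvPolynomial (Fin 2) k) F -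
                2 * MvPolynomial.X 0 ^ (n - 1) + MvPolynomial.X 1 ^ (n - 1) -
                MvPolynomial.C d))) = 0}).Finite ∧
    ({d : k | ∃ v : Fin 3 → k, v ≠ 0 ∧
        MvPolynomial.eval v
          (homogenize n
            (Polynomial.aeval (MvPolynomial.X 1 : MvPolynomial (Fin 2) k) F -
              2 * MvPolynomial.X 0 ^ (n - 1) + MvPolynomial.X 1 ^ (n - 1) -
              MvPolynomial.C d)) = 0 ∧
        ∀ j : Fin 3, MvPolynomial.eval v
          (MvPolynomial.pderiv j
            (homogenize n
              (Polynomial.aeval (MvPolynomial.X 1 : MvPolynomial (Fin 2) k) F -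
                2 * MvPolynomial.X 0 ^ (n - 1) + MvPolynomial.X 1 ^ (n - 1) -
                MvPolynomial.C d))) = 0}).ncard ≤ n - 1 :=
  stmt_8_general k p hp hodd n hn hpn F hF hdeg
end
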